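/- arXiv:1904.00916 — 8 statements merged into one kernel-verified Lean document; each statement's English description precedes it below -/
import Mathlib

section
/- Let M > 0 and 0 ≤ a < M. For any real constants E, Φ, Q with E ≠ 0, define R(r)/E² = r⁴ + (a² − Φ² − Q)r² + 2M((a − Φ)² + Q)r − a²Q. If the coefficient a² − Φ² − Q is nonnegative, then the polynomial r ↦ R(r)/E² cannot have two distinct roots r₁ < r₂ both greater than M + √(M² − a²) with R/E² ≥ 0 on (r₁, r₂) and R/E² < 0 immediately to the left of r₁. -/
/-!
With `a² − Φ² − Q ≥ 0` the potential is `r⁴` plus a convex quadratic, hence strictly convex,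
so it is strictly negative strictly between any two of its roots.
-/

open Set

theorem StrictConvexOn.neg_of_mem_Ioo_of_eq_zero {𝕜 : Type*} [Field 𝕜] [LinearOrder 𝕜]
    [IsStrictOrderedRing 𝕜] {s : Set 𝕜} {f : 𝕜 → 𝕜} (hf : StrictConvexOn 𝕜 s f)
    {x y z : 𝕜} (hx : x ∈ s) (hy : y ∈ s) (hfx : f x = 0) (hfy : f y = 0) (hz : z ∈ Ioo x y) :
    f z < 0 := by
  have hxy : x < y := hz.1.trans hz.2
  simpa [hfx, hfy] using
    hf.lt_on_openSegment hx hy hxy.ne (by rwa [openSegment_eq_Ioo hxy])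

theorem strictConvexOn_quartic_of_nonneg (c d e : ℝ) (hc : 0 ≤ c) :
    StrictConvexOn ℝ univ fun r : ℝ => r ^ 4 + c * r ^ 2 + d * r - e := by
  have hquartic : StrictConvexOn ℝ univ fun r : ℝ => r ^ 4 :=
    Even.strictConvexOn_pow ⟨2, rfl⟩ (by norm_num)
  have hquadratic : ConvexOn ℝ univ fun r : ℝ => c • r ^ 2 :=
    (Even.convexOn_pow ⟨1, rfl⟩).smul hc
  have haffine : ConvexOn ℝ univ fun r : ℝ => d * r + -e :=
    ((LinearMap.mulLeft ℝ d).convexOn convex_univ).add_const (-e)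
  have hsum : (fun r : ℝ => r ^ 4 + c * r ^ 2 + d * r - e) =
      (fun r : ℝ => r ^ 4) + ((fun r : ℝ => c • r ^ 2) + fun r : ℝ => d * r + -e) := by
    funext r
    simp only [Pi.add_apply, smul_eq_mul]
    ring
  rw [hsum]
  exact hquartic.add_convexOn (hquadratic.add haffine)

theorem kerr_no_trapping_root_configuration_general
    (M a Φ Q : ℝ)
    (p : ℝ → ℝ)
    (hp : ∀ r, p r = r^4 + (a^2 - Φ^2 - Q) * r^2
        + 2 * M * ((a - Φ)^2 + Q) * r - a^2 * Q)
    (hcoeff : 0 ≤ a^2 - Φ^2 - Q) :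
    ¬ ∃ r₁ r₂ : ℝ, r₁ < r₂ ∧
      M + Real.sqrt (M^2 - a^2) < r₁ ∧ M + Real.sqrt (M^2 - a^2) < r₂ ∧
      p r₁ = 0 ∧ p r₂ = 0 ∧
      (∀ r ∈ Set.Ioo r₁ r₂, 0 ≤ p r) ∧
      (∃ δ > 0, ∀ r ∈ Set.Ioo (r₁ - δ) r₁, p r < 0) := by
  rintro ⟨r₁, r₂, h12, -, -, hp₁, hp₂, hnonneg, -⟩
  have hconvex : StrictConvexOn ℝ univ p := by
    rw [funext hp]
    exact strictConvexOn_quartic_of_nonneg _ _ _ hcoeff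
  have hmid : (r₁ + r₂) / 2 ∈ Ioo r₁ r₂ := ⟨by linarith, by linarith⟩
  exact (hnonneg _ hmid).not_gt
    (hconvex.neg_of_mem_Ioo_of_eq_zero (mem_univ _) (mem_univ _) hp₁ hp₂ hmid)

/-- If the quadratic coefficient `a² − Φ² − Q` of the scaled Kerr radial
potential is nonnegative, there is no root configuration `r₁ < r₂` beyond the horizon
with the potential nonnegative on `(r₁, r₂)` and negative immediately to the left of `r₁`. -/
theorem kerr_no_trapping_root_configuration
    (M a E Φ Q : ℝ) (hM : 0 < M) (ha0 : 0 ≤ a) (haM : a < M) (hE : E ≠ 0)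
    (p : ℝ → ℝ)
    (hp : ∀ r, p r = r^4 + (a^2 - Φ^2 - Q) * r^2
        + 2 * M * ((a - Φ)^2 + Q) * r - a^2 * Q)
    (hcoeff : 0 ≤ a^2 - Φ^2 - Q) :
    ¬ ∃ r₁ r₂ : ℝ, r₁ < r₂ ∧
      M + Real.sqrt (M^2 - a^2) < r₁ ∧ M + Real.sqrt (M^2 - a^2) < r₂ ∧
      p r₁ = 0 ∧ p r₂ = 0 ∧
      (∀ r ∈ Set.Ioo r₁ r₂, 0 ≤ p r) ∧
      (∃ δ > 0, ∀ r ∈ Set.Ioo (r₁ - δ) r₁, p r < 0) :=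
  kerr_no_trapping_root_configuration_general M a Φ Q p hp hcoeff
end

section
/- Let M > 0 and 0 < a < M. Set r̂₁ = 2M(1 + cos((2/3) arccos(−a/M))) and r̂₂ = 2M(1 + cos((2/3) arccos(a/M))). Then the function Φ_trap(r) = −(r³ − 3Mr² + a²r + a²M)/(a(r − M)) is strictly monotonically decreasing on [r̂₁, r̂₂]. -/
/-!
Substituting `u = r - M`, the numerator becomes `u³ + (a² - 3M²) u - 2M(M² - a²)`, so
`-a Φ_trap = u² - 2M(M² - a²)/u + (a² - 3M²)`, which is strictly increasing for `u > 0` when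
`a ≤ M`. Hence `Φ_trap` is strictly decreasing on all of `(M, ∞)`, and it remains to see that
`r̂₁ > M`: since `arccos(-a/M) < π`, the angle `(2/3) arccos(-a/M)` stays below `2π/3`, so its
cosine exceeds `-1/2`.
-/

open Real Set

lemma strictMonoOn_sq_sub_const_div {c : ℝ} (hc : 0 ≤ c) :
    StrictMonoOn (fun u : ℝ => u ^ 2 - c / u) (Ioi 0) := by
  intro x hx y _ hxy
  have hsq : x ^ 2 < y ^ 2 := pow_lt_pow_left₀ hxy (le_of_lt hx) two_ne_zero
  have hdiv : c / y ≤ c / x := div_le_div_of_nonneg_left hc hx hxy.le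
  simp only
  linarith

lemma kerr_Phi_trap_eq (M a r : ℝ) (hr : r ≠ M) :
    -(r^3 - 3*M*r^2 + a^2*r + a^2*M) / (a * (r - M))
      = -((r - M) ^ 2 - 2*M*(M^2 - a^2) / (r - M) + (a^2 - 3*M^2)) / a := by
  have hu : r - M ≠ 0 := sub_ne_zero.2 hr
  rw [div_mul_eq_div_div_swap]
  congr 1
  field_simp
  ring

lemma kerr_Phi_trap_strictAntiOn_Ioi {M a : ℝ} (ha : 0 < a) (haM : a ≤ M) :
    StrictAntiOn (fun r : ℝ => -(r^3 - 3*M*r^2 + a^2*r + a^2*M) / (a * (r - M))) (Ioi M) := by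
  have hc : 0 ≤ 2*M*(M^2 - a^2) := by
    have hM : 0 ≤ M := ha.le.trans haM
    have : 0 ≤ M^2 - a^2 := by nlinarith
    positivity
  intro x hx y hy hxy
  have hmono := strictMonoOn_sq_sub_const_div hc (mem_Ioi.2 (sub_pos.2 hx))
    (mem_Ioi.2 (sub_pos.2 hy)) (sub_lt_sub_right hxy M)
  simp only at hmono ⊢
  rw [kerr_Phi_trap_eq M a x (ne_of_gt hx), kerr_Phi_trap_eq M a y (ne_of_gt hy)]
  gcongr

lemma neg_half_lt_cos_two_thirds_mul_arccos {x : ℝ} (hx : -1 < x) :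
    -(1/2) < cos ((2/3) * arccos x) := by
  have hθπ : arccos x < π := arccos_lt_pi.2 hx
  have hθ0 : 0 ≤ arccos x := arccos_nonneg x
  have hcos : cos (2*π/3) < cos ((2/3) * arccos x) :=
    strictAntiOn_cos ⟨by positivity, by linarith⟩ ⟨by positivity, by linarith [pi_pos]⟩
      (by linarith)
  rwa [show 2*π/3 = π - π/3 by ring, cos_pi_sub, cos_pi_div_three] at hcos

/-- `Φ_trap` is strictly decreasing on the spherical photon orbit range. -/
theorem kerr_Phi_trap_strictAntiOn
    (M a : ℝ) (hM : 0 < M) (ha : 0 < a) (haM : a < M) :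
    StrictAntiOn
      (fun r : ℝ => -(r^3 - 3*M*r^2 + a^2*r + a^2*M) / (a * (r - M)))
      (Set.Icc (2*M*(1 + Real.cos ((2/3) * Real.arccos (-a/M))))
               (2*M*(1 + Real.cos ((2/3) * Real.arccos (a/M))))) := by
  have hneg : -1 < -a/M := by
    rw [neg_div, neg_lt_neg_iff]
    exact (div_lt_one hM).2 haM
  have hr₁ : M < 2*M*(1 + cos ((2/3) * arccos (-a/M))) := by
    nlinarith [neg_half_lt_cos_two_thirds_mul_arccos hneg]
  exact (kerr_Phi_trap_strictAntiOn_Ioi ha haM.le).mono fun r hr => hr₁.trans_le hr.1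
end

section
/- Let M > 0 and 0 < a < M. The function Φ_trap(r) = −(r³ − 3Mr² + a²r + a²M)/(a(r − M)) has exactly one zero in the interval [r̂₁, r̂₂] (where r̂₁, r̂₂ are as in the spherical photon orbit range), namely r_m = M + 2√(M² − a²/3)·cos((1/3) arccos(M(M² − a²)/(M² − a²/3)^{3/2})). -/
/-!
Put `s = r - M`. The cubic `r³ - 3Mr² + a²r + a²M` becomes the depressed cubic `s³ - 3qs - 2c`
with `q = M² - a²/3` and `c = M(M² - a²) ≥ 0`; since `c² ≤ q³`, Viète's formula
`s₀ = 2√q cos(arccos(c / q^{3/2}) / 3)` gives a root, and `s₀² ≥ 3q` makes the quadratic cofactor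
of `s - s₀` positive for `s > 0`. Hence for `r > M` the cubic has the sign of `r - r_m`.

Both bounds `r̂` satisfy `r (r - 3M)² = 4Ma²`, on which `4M · p(r) = r (r - 3M)(r + 3M)(r - M)`.
As `M < r̂₁ < 3M < r̂₂`, the cubic is negative at `r̂₁` and positive at `r̂₂`, so `r̂₁ < r_m < r̂₂`.
-/

open Real

section DepressedCubic

variable {q c s₀ s t : ℝ}

theorem depressedCubic_eq_sub_mul (h : s₀ ^ 3 - 3 * q * s₀ - 2 * c = 0) :
    s ^ 3 - 3 * q * s - 2 * c = (s - s₀) * (s ^ 2 + s * s₀ + (s₀ ^ 2 - 3 * q)) := by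
  linear_combination h

theorem sign_depressedCubic (h : s₀ ^ 3 - 3 * q * s₀ - 2 * c = 0) (hs₀ : 0 ≤ s₀)
    (hq : 3 * q ≤ s₀ ^ 2) (hs : 0 < s) :
    SignType.sign (s ^ 3 - 3 * q * s - 2 * c) = SignType.sign (s - s₀) := by
  have hQ : 0 < s ^ 2 + s * s₀ + (s₀ ^ 2 - 3 * q) := by nlinarith [mul_nonneg hs.le hs₀]
  rw [depressedCubic_eq_sub_mul h, sign_mul, sign_pos hQ, mul_one]

/-- Viète's trigonometric root of `s³ - 3t²s - 2c`. -/
noncomputable def vieteRoot (t c : ℝ) : ℝ := 2 * t * cos (arccos (c / t ^ 3) / 3)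

theorem vieteRoot_isRoot (ht : 0 < t) (hc : |c| ≤ t ^ 3) :
    vieteRoot t c ^ 3 - 3 * t ^ 2 * vieteRoot t c - 2 * c = 0 := by
  have ht3 : 0 < t ^ 3 := by positivity
  obtain ⟨hc₁, hc₂⟩ := abs_le.1 hc
  have hcos : cos (arccos (c / t ^ 3)) = c / t ^ 3 :=
    cos_arccos ((le_div_iff₀ ht3).2 (by linarith)) ((div_le_one ht3).2 hc₂)
  have htriple := cos_three_mul (arccos (c / t ^ 3) / 3)
  rw [mul_div_cancel₀ _ three_ne_zero, hcos] at htriple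
  unfold vieteRoot
  field_simp at htriple
  linear_combination -2 * htriple

theorem vieteRoot_nonneg (ht : 0 ≤ t) : 0 ≤ vieteRoot t c := by
  have h : 0 ≤ cos (arccos (c / t ^ 3) / 3) :=
    cos_nonneg_of_neg_pi_div_two_le_of_le (by linarith [arccos_nonneg (c / t ^ 3), pi_pos])
      (by linarith [arccos_le_pi (c / t ^ 3), pi_pos])
  unfold vieteRoot
  positivity

theorem three_mul_sq_le_vieteRoot_sq (ht : 0 ≤ t) (hc : 0 ≤ c) : 3 * t ^ 2 ≤ vieteRoot t c ^ 2 := by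
  set θ := arccos (c / t ^ 3)
  have hθ : θ ≤ π / 2 := arccos_le_pi_div_two.2 (by positivity)
  have hcos : 1 / 2 ≤ cos (2 * (θ / 3)) := by
    rw [← cos_pi_div_three]
    exact cos_le_cos_of_nonneg_of_le_pi (by linarith [arccos_nonneg (c / t ^ 3)])
      (by linarith [pi_pos]) (by linarith)
  rw [cos_two_mul] at hcos
  unfold vieteRoot
  nlinarith [sq_nonneg t]

end DepressedCubic

section Kerr

variable {M a φ r : ℝ}

def sphericalOrbitCubic (M a r : ℝ) : ℝ := r ^ 3 - 3 * M * r ^ 2 + a ^ 2 * r + a ^ 2 * M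

theorem sphericalOrbitCubic_eq_depressed (M a r : ℝ) :
    sphericalOrbitCubic M a r =
      (r - M) ^ 3 - 3 * (M ^ 2 - a ^ 2 / 3) * (r - M) - 2 * (M * (M ^ 2 - a ^ 2)) := by
  unfold sphericalOrbitCubic
  ring

theorem sq_mul_sub_sq_le_sub_sq_div_three_pow_three (h : a ^ 2 ≤ M ^ 2) :
    (M * (M ^ 2 - a ^ 2)) ^ 2 ≤ (M ^ 2 - a ^ 2 / 3) ^ 3 := by
  have hdiff : (M ^ 2 - a ^ 2 / 3) ^ 3 - (M * (M ^ 2 - a ^ 2)) ^ 2 =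
      a ^ 2 * ((M ^ 2 - a ^ 2) * (M ^ 2 + a ^ 2 / 3)) + 8 / 27 * (a ^ 2) ^ 3 := by ring
  have hsub : 0 ≤ (M ^ 2 - a ^ 2) * (M ^ 2 + a ^ 2 / 3) := mul_nonneg (by linarith) (by positivity)
  nlinarith [mul_nonneg (sq_nonneg a) hsub, pow_nonneg (sq_nonneg a) 3]

/-- On the curve `r (r - 3M)² = 4 M a²` of equatorial photon orbits the cubic splits. -/
theorem four_mul_sphericalOrbitCubic_of_equatorial (h : r * (r - 3 * M) ^ 2 = 4 * M * a ^ 2) :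
    4 * M * sphericalOrbitCubic M a r = r * (r - 3 * M) * (r + 3 * M) * (r - M) := by
  unfold sphericalOrbitCubic
  linear_combination -(r + M) * h

/-- The bounds `r̂₁, r̂₂` of the photon orbit range are `photonOrbitBound M (arccos (∓a / M))`. -/
noncomputable def photonOrbitBound (M φ : ℝ) : ℝ := 2 * M * (1 + cos ((2 / 3) * φ))

theorem photonOrbitBound_eq (M φ : ℝ) : photonOrbitBound M φ = 4 * M * cos (φ / 3) ^ 2 := by
  rw [photonOrbitBound, show (2 / 3) * φ = 2 * (φ / 3) by ring, cos_two_mul]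
  ring

theorem photonOrbitBound_sub_mul_cos (M φ : ℝ) :
    (photonOrbitBound M φ - 3 * M) * cos (φ / 3) = M * cos φ := by
  have htriple := cos_three_mul (φ / 3)
  rw [mul_div_cancel₀ _ three_ne_zero] at htriple
  rw [photonOrbitBound_eq, htriple]
  ring

theorem photonOrbitBound_equatorial (M φ : ℝ) :
    photonOrbitBound M φ * (photonOrbitBound M φ - 3 * M) ^ 2 = 4 * M * (M * cos φ) ^ 2 := by
  have h₁ := photonOrbitBound_eq M φ
  have h₂ := photonOrbitBound_sub_mul_cos M φ
  set r := photonOrbitBound M φ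
  linear_combination (r - 3 * M) ^ 2 * h₁ + 4 * M * ((r - 3 * M) * cos (φ / 3) + M * cos φ) * h₂

theorem lt_photonOrbitBound (hM : 0 < M) (h₀ : 0 ≤ φ) (hπ : φ < π) : M < photonOrbitBound M φ := by
  have hcos : 1 / 2 < cos (φ / 3) := by
    rw [← cos_pi_div_three]
    exact cos_lt_cos_of_nonneg_of_le_pi (by linarith) (by linarith [pi_pos]) (by linarith)
  have hsq : 1 / 4 < cos (φ / 3) ^ 2 := by nlinarith
  rw [photonOrbitBound_eq]
  nlinarith [mul_lt_mul_of_pos_left hsq hM]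

theorem sign_sphericalOrbitCubic_photonOrbitBound (hM : 0 < M) (h₀ : 0 ≤ φ) (hπ : φ < π)
    (ha : a ^ 2 = (M * cos φ) ^ 2) :
    SignType.sign (sphericalOrbitCubic M a (photonOrbitBound M φ)) = SignType.sign (cos φ) := by
  have hrM := lt_photonOrbitBound hM h₀ hπ
  have hcos : 0 < cos (φ / 3) := cos_pos_of_mem_Ioo ⟨by linarith [pi_pos], by linarith [pi_pos]⟩
  have hsplit := four_mul_sphericalOrbitCubic_of_equatorial (ha ▸ photonOrbitBound_equatorial M φ)
  have hsign := congrArg SignType.sign (photonOrbitBound_sub_mul_cos M φ)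
  set r := photonOrbitBound M φ
  replace hsplit := congrArg SignType.sign hsplit
  simp only [sign_mul, sign_pos hcos, sign_pos hM, sign_pos (by linarith : (0 : ℝ) < 4 * M),
    sign_pos (by linarith : 0 < r), sign_pos (by linarith : 0 < r + 3 * M),
    sign_pos (sub_pos.2 hrM), one_mul, mul_one] at hsplit hsign
  rw [hsplit, hsign]

theorem sign_sphericalOrbitCubic_photonOrbitBound_arccos {b : ℝ} (hM : 0 < M) (hbM : |b| < M)
    (hb : b ^ 2 = a ^ 2) :
    SignType.sign (sphericalOrbitCubic M a (photonOrbitBound M (arccos (b / M)))) =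
      SignType.sign b := by
  obtain ⟨hb₁, hb₂⟩ := abs_lt.1 hbM
  have hcos : cos (arccos (b / M)) = b / M :=
    cos_arccos ((le_div_iff₀ hM).2 (by linarith)) ((div_le_one hM).2 hb₂.le)
  rw [sign_sphericalOrbitCubic_photonOrbitBound hM (arccos_nonneg _)
    (arccos_lt_pi.2 ((lt_div_iff₀ hM).2 (by linarith)))
    (by rw [hcos, mul_div_cancel₀ _ hM.ne', hb]), hcos, div_eq_mul_inv, sign_mul,
    sign_pos (inv_pos.2 hM), mul_one]

/-- The radius `r_m` of the spherical photon orbits with vanishing angular momentum. -/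
noncomputable def trappedRadius (M a : ℝ) : ℝ :=
  M + vieteRoot √(M ^ 2 - a ^ 2 / 3) (M * (M ^ 2 - a ^ 2))

theorem sign_sphericalOrbitCubic (hM : 0 < M) (ha : a ^ 2 ≤ M ^ 2) (hr : M < r) :
    SignType.sign (sphericalOrbitCubic M a r) = SignType.sign (r - trappedRadius M a) := by
  have hq : 0 < M ^ 2 - a ^ 2 / 3 := by nlinarith
  have hc : 0 ≤ M * (M ^ 2 - a ^ 2) := mul_nonneg hM.le (by linarith)
  have hcq : |M * (M ^ 2 - a ^ 2)| ≤ √(M ^ 2 - a ^ 2 / 3) ^ 3 := by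
    refine abs_le_of_sq_le_sq ?_ (by positivity)
    rw [← pow_mul, show 3 * 2 = 2 * 3 from rfl, pow_mul, sq_sqrt hq.le]
    exact sq_mul_sub_sq_le_sub_sq_div_three_pow_three ha
  have hroot := vieteRoot_isRoot (sqrt_pos.2 hq) hcq
  have hlarge := three_mul_sq_le_vieteRoot_sq (sqrt_nonneg (M ^ 2 - a ^ 2 / 3)) hc
  rw [sq_sqrt hq.le] at hroot hlarge
  rw [sphericalOrbitCubic_eq_depressed, sign_depressedCubic hroot (vieteRoot_nonneg (sqrt_nonneg _))
    hlarge (sub_pos.2 hr), trappedRadius, sub_sub]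

theorem sign_photonOrbitBound_arccos_sub_trappedRadius {b : ℝ} (hM : 0 < M) (hbM : |b| < M)
    (hb : b ^ 2 = a ^ 2) :
    SignType.sign (photonOrbitBound M (arccos (b / M)) - trappedRadius M a) = SignType.sign b := by
  have hbM' := abs_lt.1 hbM
  rw [← sign_sphericalOrbitCubic hM (hb ▸ sq_lt_sq' hbM'.1 hbM'.2).le
    (lt_photonOrbitBound hM (arccos_nonneg _) (arccos_lt_pi.2 ((lt_div_iff₀ hM).2 (by linarith)))),
    sign_sphericalOrbitCubic_photonOrbitBound_arccos hM hbM hb]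

end Kerr

/-- `Φ_trap` has exactly one zero in the spherical photon orbit range,
namely `r_m`. -/
theorem kerr_Phi_trap_unique_zero
    (M a : ℝ) (hM : 0 < M) (ha : 0 < a) (haM : a < M)
    (r₁ r₂ rm : ℝ)
    (hr₁ : r₁ = 2*M*(1 + Real.cos ((2/3) * Real.arccos (-a/M))))
    (hr₂ : r₂ = 2*M*(1 + Real.cos ((2/3) * Real.arccos (a/M))))
    (hrm : rm = M + 2 * Real.sqrt (M^2 - a^2/3) *
      Real.cos ((1/3) * Real.arccos (M*(M^2 - a^2) / (M^2 - a^2/3) ^ ((3:ℝ)/2))))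
    (Φtrap : ℝ → ℝ)
    (hΦ : ∀ r, Φtrap r = -(r^3 - 3*M*r^2 + a^2*r + a^2*M) / (a * (r - M))) :
    rm ∈ Set.Icc r₁ r₂ ∧ ∀ r ∈ Set.Icc r₁ r₂, (Φtrap r = 0 ↔ r = rm) := by
  have haM2 : a ^ 2 ≤ M ^ 2 := pow_le_pow_left₀ ha.le haM.le 2
  have hrm' : rm = trappedRadius M a := by
    rw [hrm, trappedRadius, vieteRoot, rpow_div_two_eq_sqrt _ (by nlinarith)]
    norm_cast
    rw [one_div_mul_eq_div]
  have hr₁' : r₁ = photonOrbitBound M (arccos (-a / M)) := hr₁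
  have hr₂' : r₂ = photonOrbitBound M (arccos (a / M)) := hr₂
  have hr₁M : M < r₁ := hr₁' ▸ lt_photonOrbitBound hM (arccos_nonneg _)
    (arccos_lt_pi.2 ((lt_div_iff₀ hM).2 (by linarith)))
  have hr₁rm : r₁ < rm := sub_neg.1 <| sign_eq_neg_one_iff.1 <| by
    rw [hr₁', hrm', sign_photonOrbitBound_arccos_sub_trappedRadius hM
      (by rwa [abs_neg, abs_of_pos ha]) (neg_sq a), _root_.sign_neg (neg_neg_of_pos ha)]
  have hrmr₂ : rm < r₂ := sub_pos.1 <| sign_eq_one_iff.1 <| by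
    rw [hr₂', hrm', sign_photonOrbitBound_arccos_sub_trappedRadius hM
      (by rwa [abs_of_pos ha]) rfl, sign_pos ha]
  refine ⟨⟨hr₁rm.le, hrmr₂.le⟩, fun r hr => ?_⟩
  have hrM : M < r := hr₁M.trans_le hr.1
  have hp : r ^ 3 - 3 * M * r ^ 2 + a ^ 2 * r + a ^ 2 * M = sphericalOrbitCubic M a r := rfl
  rw [hΦ, hp, neg_div, neg_eq_zero, div_eq_zero_iff, or_iff_left (mul_pos ha (sub_pos.2 hrM)).ne',
    ← _root_.sign_eq_zero_iff, sign_sphericalOrbitCubic hM haM2 hrM, _root_.sign_eq_zero_iff,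
    sub_eq_zero, hrm']
end

section
/- Let M > 0, 0 < a < M, and r in the spherical photon orbit range [r̂₁, r̂₂]. Then it is impossible that Φ_trap(r) = 0 and Q_trap(r) = 0 simultaneously. -/
/-! The numerators of `Φ_trap` and `Q_trap` satisfy
`(r + M) · numQ + 4M · numΦ = r (r - M) (r - 3M) (r + 3M)`, so a common zero with `r > M`
sits at `r = 3M`, where `numΦ = 4a²M ≠ 0`. The bound `r̂₁ > M`, which keeps the
denominators away from zero, amounts to `arccos (-a/M) < π`, i.e. to `a < M`. -/

open Real

lemma neg_half_lt_cos_two_thirds_mul {θ : ℝ} (h0 : 0 ≤ θ) (hπ : θ < π) :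
    -(1 / 2) < cos ((2 / 3) * θ) := by
  have hcos : cos (2 * π / 3) = -(1 / 2) := by
    rw [show 2 * π / 3 = π - π / 3 by ring, cos_pi_sub, cos_pi_div_three]
  rw [← hcos]
  exact cos_lt_cos_of_nonneg_of_le_pi (by positivity) (by linarith [pi_pos]) (by linarith)

lemma lt_two_mul_one_add_cos_two_thirds_arccos {M x : ℝ} (hM : 0 < M) (hx : -1 < x) :
    M < 2 * M * (1 + cos ((2 / 3) * arccos x)) := by
  have := neg_half_lt_cos_two_thirds_mul (arccos_nonneg x) (arccos_lt_pi.2 hx)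
  nlinarith

lemma eq_zero_of_spherical_orbit_numerators_eq_zero {M a r : ℝ} (hM : 0 < M) (hr : M < r)
    (hΦ : r ^ 3 - 3 * M * r ^ 2 + a ^ 2 * r + a ^ 2 * M = 0)
    (hQ : r ^ 3 - 6 * M * r ^ 2 + 9 * M ^ 2 * r - 4 * a ^ 2 * M = 0) :
    a = 0 := by
  have hfactor : r * (r - M) * (r - 3 * M) * (r + 3 * M) = 0 := by
    linear_combination (r + M) * hQ + 4 * M * hΦ
  have hr3M : r = 3 * M := by
    have hr0 : r ≠ 0 := by linarith
    have hrM : r - M ≠ 0 := by linarith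
    have hr_add : r + 3 * M ≠ 0 := by linarith
    simpa [hr0, hrM, hr_add, sub_eq_zero] using hfactor
  subst hr3M
  have : 4 * M * a ^ 2 = 0 := by linear_combination hΦ
  simpa [hM.ne'] using this

/-- `Φ_trap` and `Q_trap` cannot vanish simultaneously on the spherical
photon orbit range. -/
theorem kerr_Phi_Q_trap_not_both_zero
    (M a : ℝ) (hM : 0 < M) (ha : 0 < a) (haM : a < M)
    (r : ℝ)
    (hr : r ∈ Set.Icc (2*M*(1 + Real.cos ((2/3) * Real.arccos (-a/M))))
                      (2*M*(1 + Real.cos ((2/3) * Real.arccos (a/M))))) :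
    ¬ (-(r^3 - 3*M*r^2 + a^2*r + a^2*M) / (a * (r - M)) = 0 ∧
       -(r^3 * (r^3 - 6*M*r^2 + 9*M^2*r - 4*a^2*M)) / (a^2 * (r - M)^2) = 0) := by
  rintro ⟨hΦ, hQ⟩
  have hx : -1 < -a / M := by
    rw [neg_div, neg_lt_neg_iff, div_lt_one hM]
    exact haM
  have hrM : M < r := (lt_two_mul_one_add_cos_two_thirds_arccos hM hx).trans_le hr.1
  have hr0 : r ≠ 0 := by linarith
  have hrM' : r - M ≠ 0 := sub_ne_zero.2 hrM.ne'
  have hΦnum : r^3 - 3*M*r^2 + a^2*r + a^2*M = 0 :=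
    neg_eq_zero.1 ((div_eq_zero_iff.1 hΦ).resolve_right (mul_ne_zero ha.ne' hrM'))
  have hQnum : r^3 - 6*M*r^2 + 9*M^2*r - 4*a^2*M = 0 := by
    have hden : a^2 * (r - M)^2 ≠ 0 := mul_ne_zero (pow_ne_zero 2 ha.ne') (pow_ne_zero 2 hrM')
    exact (mul_eq_zero.1 (neg_eq_zero.1 ((div_eq_zero_iff.1 hQ).resolve_right hden))).resolve_left
      (pow_ne_zero 3 hr0)
  exact ha.ne' (eq_zero_of_spherical_orbit_numerators_eq_zero hM hrM hΦnum hQnum)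
end

section
/- Let M > 0, 0 < a < M, and r in the spherical photon orbit range [r̂₁, r̂₂]. Then it is impossible that Q_trap(r) = 0 and Q_trap′(r) = 0 simultaneously. -/
/-!
Write `Q_trap(s) = g(s) · P(s)` with `g(s) = -s³ / (a²(s - M)²)` and
`P(s) = s³ - 6Ms² + 9M²s - 4a²M`. Since `r̂₁ > M`, `g` is smooth and nonzero at `r`, so a
common zero of `Q_trap` and `Q_trap'` is a double root of `P`. But
`P(s) = (s - M)²(s - 4M) + 4M(M² - a²)` has critical points `M` and `3M` only, where it takes
the values `4M(M² - a²) > 0` and `-4a²M < 0`.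
-/

open Real

theorem neg_half_lt_cos_two_thirds_arccos {x : ℝ} (hx : -1 < x) :
    -(1 / 2) < cos ((2 / 3) * arccos x) := by
  have hcos : cos (π - π / 3) = -(1 / 2) := by rw [cos_pi_sub, cos_pi_div_three]
  rw [← hcos]
  apply cos_lt_cos_of_nonneg_of_le_pi (mul_nonneg (by norm_num) (arccos_nonneg x))
    (by linarith [pi_pos])
  linarith [arccos_lt_pi.2 hx]

theorem lt_lower_photon_radius {M a : ℝ} (hM : 0 < M) (haM : a < M) :
    M < 2 * M * (1 + cos ((2 / 3) * arccos (-a / M))) := by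
  have hx : -1 < -a / M := by
    rw [neg_div, neg_lt_neg_iff]
    exact (div_lt_one hM).2 haM
  nlinarith [neg_half_lt_cos_two_thirds_arccos hx]

theorem DifferentiableAt.hasDerivAt_mul_of_eq_zero {𝕜 𝔸 : Type*} [NontriviallyNormedField 𝕜]
    [NormedRing 𝔸] [NormedAlgebra 𝕜 𝔸] {g h : 𝕜 → 𝔸} {h' : 𝔸} {x : 𝕜}
    (hg : DifferentiableAt 𝕜 g x) (hh : HasDerivAt h h' x) (hx : h x = 0) :
    HasDerivAt (g * h) (g x * h') x := by
  simpa [hx] using hg.hasDerivAt.mul hh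

def photonOrbitPoly (M a s : ℝ) : ℝ := s ^ 3 - 6 * M * s ^ 2 + 9 * M ^ 2 * s - 4 * a ^ 2 * M

theorem hasDerivAt_photonOrbitPoly (M a s : ℝ) :
    HasDerivAt (photonOrbitPoly M a) (3 * ((s - M) * (s - 3 * M))) s := by
  have := ((((hasDerivAt_pow 3 s).fun_sub ((hasDerivAt_pow 2 s).const_mul (6 * M))).fun_add
    ((hasDerivAt_id' s).const_mul (9 * M ^ 2))).sub_const (4 * a ^ 2 * M))
  exact this.congr_deriv (by push_cast; ring)

theorem photonOrbitPoly_eq (M a s : ℝ) :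
    photonOrbitPoly M a s = (s - M) ^ 2 * (s - 4 * M) + 4 * M * (M ^ 2 - a ^ 2) := by
  unfold photonOrbitPoly; ring

theorem photonOrbitPoly_no_double_root {M a s : ℝ} (hM : M ≠ 0) (ha : a ≠ 0)
    (haM : a ^ 2 ≠ M ^ 2) (hs : photonOrbitPoly M a s = 0) : (s - M) * (s - 3 * M) ≠ 0 := by
  rw [photonOrbitPoly_eq] at hs
  rintro hcrit
  rcases mul_eq_zero.1 hcrit with h | h
  · rw [h] at hs
    have : M * (M ^ 2 - a ^ 2) = 0 := by linear_combination hs / 4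
    rcases mul_eq_zero.1 this with h' | h'
    · exact hM h'
    · exact haM (by linear_combination -h')
  · rw [show s = 3 * M by linear_combination h] at hs
    have : M * a ^ 2 = 0 := by linear_combination -hs / 4
    simp_all

/-- `Q_trap` and its derivative cannot vanish simultaneously on the
spherical photon orbit range. -/
theorem kerr_Q_trap_simple_zeros
    (M a : ℝ) (hM : 0 < M) (ha : 0 < a) (haM : a < M)
    (r : ℝ)
    (hr : r ∈ Set.Icc (2*M*(1 + Real.cos ((2/3) * Real.arccos (-a/M))))
                      (2*M*(1 + Real.cos ((2/3) * Real.arccos (a/M)))))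
    (Qtrap : ℝ → ℝ)
    (hQ : ∀ s, Qtrap s = -(s^3 * (s^3 - 6*M*s^2 + 9*M^2*s - 4*a^2*M))
        / (a^2 * (s - M)^2)) :
    ¬ (Qtrap r = 0 ∧ deriv Qtrap r = 0) := by
  rintro ⟨hQr, hQ'r⟩
  have hMr : M < r := (lt_lower_photon_radius hM haM).trans_le hr.1
  set g : ℝ → ℝ := fun s => -s ^ 3 / (a ^ 2 * (s - M) ^ 2)
  have hfac : Qtrap = g * photonOrbitPoly M a :=
    funext fun s => by rw [hQ, Pi.mul_apply, photonOrbitPoly]; ring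
  have hden : a ^ 2 * (r - M) ^ 2 ≠ 0 := by have := sub_pos.2 hMr; positivity
  have hgr : g r ≠ 0 := div_ne_zero (neg_ne_zero.2 (pow_ne_zero 3 (hM.trans hMr).ne')) hden
  have hPr : photonOrbitPoly M a r = 0 := by
    rw [hfac, Pi.mul_apply] at hQr
    exact (mul_eq_zero.1 hQr).resolve_left hgr
  have hg : DifferentiableAt ℝ g r := by fun_prop (disch := exact hden)
  have hQ' := hg.hasDerivAt_mul_of_eq_zero (hasDerivAt_photonOrbitPoly M a r) hPr
  rw [hfac, hQ'.deriv] at hQ'r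
  have hcrit : (r - M) * (r - 3 * M) = 0 :=
    (mul_eq_zero.1 ((mul_eq_zero.1 hQ'r).resolve_left hgr)).resolve_left three_ne_zero
  exact photonOrbitPoly_no_double_root hM.ne' ha.ne'
    (pow_lt_pow_left₀ haM ha.le two_ne_zero).ne hPr hcrit
end

section
/- Let M > 0, 0 < a < M, Q > 0 and Φ real with a² − Φ² − Q < 0. Suppose C ∈ (−1, 1), C ≠ 0, S² = 1 − C² > 0 satisfy: (i) Q − (Φ²/S² − a²)C² = 0 and (ii) Φ²/S³ + (Φ²/S² − a²)S = 0. Then Φ² + Q·S⁴/C² = 0, hence Φ = 0 and Q = 0, a contradiction; therefore no such C exists. -/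
/-!
Multiplying (ii) by `S³` gives `Φ²/S² − a² = −Φ²/S⁴`; substituting this into (i) yields
`Φ² C² + Q S⁴ = 0`, a sum of a square and a positive term.
-/

section Field

variable {K : Type*} [Field K] {a Φ Q C S : K}

lemma latitudinal_coeff_eq_of_deriv_eq_zero (hS : S ≠ 0)
    (h2 : Φ^2 / S^3 + (Φ^2 / S^2 - a^2) * S = 0) :
    Φ^2 / S^2 - a^2 = -(Φ^2 / S^4) := by
  have : (Φ^2 / S^2 - a^2) * S = -(Φ^2 / S^3) := eq_neg_of_add_eq_zero_right h2
  field_simp at this ⊢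
  linear_combination this

lemma sq_mul_sq_add_mul_pow_four_eq_zero_of_degenerate (hS : S ≠ 0)
    (h1 : Q - (Φ^2 / S^2 - a^2) * C^2 = 0)
    (h2 : Φ^2 / S^3 + (Φ^2 / S^2 - a^2) * S = 0) :
    Φ^2 * C^2 + Q * S^4 = 0 := by
  rw [latitudinal_coeff_eq_of_deriv_eq_zero hS h2] at h1
  field_simp at h1
  linear_combination h1

end Field

theorem kerr_theta_no_degenerate_point_general
    (a Φ Q : ℝ) (hQ : 0 < Q) (C S : ℝ) (hSpos : 0 < S^2)
    (h1 : Q - (Φ^2 / S^2 - a^2) * C^2 = 0)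
    (h2 : Φ^2 / S^3 + (Φ^2 / S^2 - a^2) * S = 0) :
    False := by
  have hS : S ≠ 0 := by rintro rfl; simp at hSpos
  have key := sq_mul_sq_add_mul_pow_four_eq_zero_of_degenerate hS h1 h2
  have hpos : 0 < Q * S^4 := by positivity
  have hnonneg : 0 ≤ Φ^2 * C^2 := by positivity
  linarith

/-- the degeneracy equations for the latitudinal potential have no
solution with `Q > 0` and `a² − Φ² − Q < 0`. -/
theorem kerr_theta_no_degenerate_point
    (M a Φ Q : ℝ) (hM : 0 < M) (ha : 0 < a) (haM : a < M)
    (hQ : 0 < Q) (hcoeff : a^2 - Φ^2 - Q < 0)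
    (C S : ℝ) (hC : C ∈ Set.Ioo (-1 : ℝ) 1) (hC0 : C ≠ 0)
    (hS : S^2 = 1 - C^2) (hSpos : 0 < S^2)
    (h1 : Q - (Φ^2 / S^2 - a^2) * C^2 = 0)
    (h2 : Φ^2 / S^3 + (Φ^2 / S^2 - a^2) * S = 0) :
    False :=
  kerr_theta_no_degenerate_point_general a Φ Q hQ C S hSpos h1 h2
end

section
/- Let M > 0 and 0 < a < M. Then r̂₁ = 2M(1 + cos((2/3) arccos(−a/M))) satisfies M + √(M² − a²) < r̂₁ < 3M, and r̂₂ = 2M(1 + cos((2/3) arccos(a/M))) satisfies 3M < r̂₂ < 4M. -/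
/-!
With `x = a / M ∈ (0, 1)` the radii are `M · 2(1 + cos (2θ/3))` with `θ = arccos (∓x)`.
For `r̂₂`, `θ ∈ (0, π/2)` puts `cos (2θ/3)` in `(1/2, 1)`; for `r̂₁`, `θ ∈ (π/2, π)` puts it below
`1/2`. The horizon bound reads `sin θ < 1 + 2 cos (2θ/3)`, and writing `θ = 3φ` the difference of
the two sides factors as `(1 - sin φ)(3 - 4 sin² φ)`, which is positive since `0 ≤ φ < π/3`.
-/

open Real

lemma one_add_two_mul_cos_two_mul_sub_sin_three_mul (φ : ℝ) :
    1 + 2 * cos (2 * φ) - sin (3 * φ) = (1 - sin φ) * (3 - 4 * sin φ ^ 2) := by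
  rw [cos_two_mul, sin_three_mul]
  linear_combination 4 * sin_sq_add_cos_sq φ

lemma sin_three_mul_lt_one_add_two_mul_cos_two_mul {φ : ℝ} (h : sin φ ^ 2 < 3 / 4) :
    sin (3 * φ) < 1 + 2 * cos (2 * φ) := by
  have hsin : sin φ < 1 := by nlinarith
  have := one_add_two_mul_cos_two_mul_sub_sin_three_mul φ
  nlinarith [mul_pos (sub_pos.2 hsin) (show (0 : ℝ) < 3 - 4 * sin φ ^ 2 by linarith)]

lemma half_lt_cos_arccos_div_three {y : ℝ} (hy : -1 < y) : 1 / 2 < cos (arccos y / 3) := by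
  rw [← cos_pi_div_three]
  have := arccos_lt_pi.2 hy
  exact cos_lt_cos_of_nonneg_of_le_pi (by linarith [arccos_nonneg y]) (by linarith [pi_pos])
    (by linarith)

lemma sqrt_one_sub_sq_lt_one_add_two_mul_cos_two_div_three_mul_arccos {y : ℝ} (hy : -1 < y) :
    √(1 - y ^ 2) < 1 + 2 * cos (2 / 3 * arccos y) := by
  set φ := arccos y / 3 with hφ
  have hcos := half_lt_cos_arccos_div_three hy
  have hsin : sin φ ^ 2 < 3 / 4 := by nlinarith [sin_sq_add_cos_sq φ]
  have key := sin_three_mul_lt_one_add_two_mul_cos_two_mul hsin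
  rwa [hφ, mul_div_cancel₀ _ three_ne_zero, sin_arccos, ← mul_div_assoc, mul_div_right_comm]
    at key

lemma cos_two_div_three_mul_arccos_lt_half {x : ℝ} (hx : x < 0) :
    cos (2 / 3 * arccos x) < 1 / 2 := by
  rw [← cos_pi_div_three]
  have : π / 2 < arccos x := not_le.1 (mt arccos_le_pi_div_two.1 (not_le.2 hx))
  exact cos_lt_cos_of_nonneg_of_le_pi (by positivity) (by linarith [arccos_le_pi x]) (by linarith)

lemma half_lt_cos_two_div_three_mul_arccos {x : ℝ} (hx : 0 < x) :
    1 / 2 < cos (2 / 3 * arccos x) := by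
  rw [← cos_pi_div_three]
  have := arccos_lt_pi_div_two.2 hx
  exact cos_lt_cos_of_nonneg_of_le_pi (by linarith [arccos_nonneg x]) (by linarith [pi_pos])
    (by linarith)

lemma cos_two_div_three_mul_arccos_lt_one {x : ℝ} (hx : x < 1) :
    cos (2 / 3 * arccos x) < 1 := by
  rw [← cos_zero]
  have := arccos_pos.2 hx
  exact cos_lt_cos_of_nonneg_of_le_pi le_rfl (by linarith [arccos_le_pi x]) (by positivity)

lemma sqrt_sq_sub_sq_eq_mul_sqrt_one_sub_div_sq {M : ℝ} (hM : 0 < M) (a : ℝ) :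
    √(M ^ 2 - a ^ 2) = M * √(1 - (a / M) ^ 2) := by
  rw [show M ^ 2 - a ^ 2 = M ^ 2 * (1 - (a / M) ^ 2) by field_simp,
    sqrt_mul (by positivity), sqrt_sq hM.le]

/-- location of the equatorial circular photon orbit radii. -/
theorem kerr_circular_orbit_radii_bounds
    (M a : ℝ) (hM : 0 < M) (ha : 0 < a) (haM : a < M) :
    (M + Real.sqrt (M^2 - a^2) < 2*M*(1 + Real.cos ((2/3) * Real.arccos (-a/M))) ∧
      2*M*(1 + Real.cos ((2/3) * Real.arccos (-a/M))) < 3*M) ∧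
    (3*M < 2*M*(1 + Real.cos ((2/3) * Real.arccos (a/M))) ∧
      2*M*(1 + Real.cos ((2/3) * Real.arccos (a/M))) < 4*M) := by
  have hx₀ : 0 < a / M := div_pos ha hM
  have hx₁ : a / M < 1 := (div_lt_one hM).2 haM
  have horizon := sqrt_one_sub_sq_lt_one_add_two_mul_cos_two_div_three_mul_arccos
    (y := -a / M) (by rw [neg_div]; linarith)
  rw [show (-a / M) ^ 2 = (a / M) ^ 2 by ring] at horizon
  have h₁ := cos_two_div_three_mul_arccos_lt_half (x := -a / M) (by rw [neg_div]; linarith)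
  have h₂ := half_lt_cos_two_div_three_mul_arccos hx₀
  have h₃ := cos_two_div_three_mul_arccos_lt_one hx₁
  refine ⟨⟨?_, by nlinarith⟩, by nlinarith, by nlinarith⟩
  rw [sqrt_sq_sub_sq_eq_mul_sqrt_one_sub_div_sq hM]
  nlinarith [mul_lt_mul_of_pos_left horizon hM]
end

section
/- Let M > 0 and 0 < a < M. For r in the open interval (r̂₁, r̂₂) of spherical photon orbit radii, define for C² ∈ [0, 1) the latitudinal potential Θ̃(r, C) = Q_trap(r) − (Φ_trap(r)²/(1 − C²) − a²)C². Then for each r ∈ (r̂₁, r̂₂) the set {C ∈ (−1,1) : Θ̃(r, C) ≥ 0} is a closed interval [−C_max(r), C_max(r)] symmetric about 0, with 0 < C_max(r) ≤ 1, and C_max(r) = 1 is approached only when Φ_trap(r) = 0. -/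
/-!
`r̂₁ < r̂₂` are consecutive roots of the cubic `r³ - 6Mr² + 9M²r - 4a²M` (Viète's trigonometric
solution), which is negative between them; hence `Q_trap r > 0`. Multiplying by `1 - C² > 0`,
`Θ̃ ≥ 0` becomes `f (C²) ≥ 0` for the concave quadratic `f x = Q (1 - x) - Φ² x + a² x (1 - x)`,
which is `Q > 0` at `0` and `-Φ² ≤ 0` at `1`. So on `x ≥ 0` it is nonnegative exactly on `[0, u]`
with `0 < u ≤ 1`, where `u = 1` forces `Φ = 0`, and `C_max = √u`.
-/

open Real Set

-- `r̂₁ = photonOrbitRadius M (-a/M)` and `r̂₂ = photonOrbitRadius M (a/M)`.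
noncomputable def photonOrbitRadius (M t : ℝ) : ℝ := 2 * M * (1 + cos (2 / 3 * arccos t))

-- Viète's trigonometric solution: `cos (3φ) = 4 cos³ φ - 3 cos φ` with `3φ = 2 arccos t`.
lemma photonOrbitRadius_cubic (M : ℝ) {t : ℝ} (ht₁ : -1 ≤ t) (ht₂ : t ≤ 1) :
    photonOrbitRadius M t ^ 3 - 6 * M * photonOrbitRadius M t ^ 2
      + 9 * M ^ 2 * photonOrbitRadius M t - 4 * t ^ 2 * M ^ 3 = 0 := by
  have h := cos_three_mul (2 / 3 * arccos t)
  rw [show 3 * (2 / 3 * arccos t) = 2 * arccos t by ring, cos_two_mul, cos_arccos ht₁ ht₂] at h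
  unfold photonOrbitRadius
  linear_combination (-2 * M ^ 3) * h

lemma photonOrbitRadius_mem_Ioo_of_neg {M t : ℝ} (hM : 0 < M) (ht₁ : -1 < t) (ht₂ : t < 0) :
    photonOrbitRadius M t ∈ Ioo M (3 * M) := by
  have hθ₁ : π / 2 < arccos t := by
    have h := arccos_lt_pi_div_two.2 (neg_pos.2 ht₂)
    rw [arccos_neg] at h
    linarith
  have hθ₂ : arccos t < π := arccos_lt_pi.2 ht₁
  have hcos₁ : cos (2 / 3 * arccos t) < cos (π / 3) :=
    cos_lt_cos_of_nonneg_of_le_pi (by positivity) (by linarith) (by linarith)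
  have hcos₂ : cos (π - π / 3) < cos (2 / 3 * arccos t) :=
    cos_lt_cos_of_nonneg_of_le_pi (by linarith [pi_pos]) (by linarith) (by linarith)
  rw [cos_pi_sub, cos_pi_div_three] at hcos₂
  rw [cos_pi_div_three] at hcos₁
  unfold photonOrbitRadius
  constructor <;> nlinarith

lemma three_mul_lt_photonOrbitRadius {M t : ℝ} (hM : 0 < M) (ht₁ : 0 < t) (ht₂ : t < 1) :
    3 * M < photonOrbitRadius M t := by
  have hθ₁ : 0 < arccos t := arccos_pos.2 ht₂
  have hθ₂ : arccos t < π / 2 := arccos_lt_pi_div_two.2 ht₁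
  have hcos : cos (π / 3) < cos (2 / 3 * arccos t) :=
    cos_lt_cos_of_nonneg_of_le_pi (by positivity) (by linarith) (by linarith)
  rw [cos_pi_div_three] at hcos
  unfold photonOrbitRadius
  nlinarith

lemma cubic_neg_of_mem_Ioo_roots {M k A B r : ℝ} (hMA : M < A) (hA3M : A < 3 * M)
    (h3MB : 3 * M < B) (hA : A ^ 3 - 6 * M * A ^ 2 + 9 * M ^ 2 * A - k = 0)
    (hB : B ^ 3 - 6 * M * B ^ 2 + 9 * M ^ 2 * B - k = 0) (hAr : A < r) (hrB : r < B) :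
    r ^ 3 - 6 * M * r ^ 2 + 9 * M ^ 2 * r - k < 0 := by
  have hsum : A ^ 2 + A * B + B ^ 2 - 6 * M * (A + B) + 9 * M ^ 2 = 0 := by
    have h : (A - B) * (A ^ 2 + A * B + B ^ 2 - 6 * M * (A + B) + 9 * M ^ 2) = 0 := by
      linear_combination hA - hB
    exact (mul_eq_zero.1 h).resolve_left (by linarith)
  -- by Vieta `6M - A - B` is the third root; it lies below `A`
  have hthird : 6 * M - A - B < A := by
    have h : (B - (6 * M - 2 * A)) * (B - A) = 3 * (A - M) * (3 * M - A) := by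
      linear_combination hsum
    nlinarith [mul_pos (sub_pos.2 hMA) (sub_pos.2 hA3M)]
  have hfactor : r ^ 3 - 6 * M * r ^ 2 + 9 * M ^ 2 * r - k
      = (r - A) * (r - B) * (r - (6 * M - A - B)) := by
    linear_combination (r - A) * hsum + hA
  rw [hfactor]
  exact mul_neg_of_neg_of_pos (mul_neg_of_pos_of_neg (by linarith) (by linarith)) (by linarith)

lemma exists_pos_root_factor {α Q : ℝ} (hα : 0 < α) (hQ : 0 < Q) (b : ℝ) :
    ∃ u > 0, 0 < α * u + b ∧ ∀ x, Q - b * x - α * x ^ 2 = (u - x) * (α * (x + u) + b) := by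
  have hdisc : 0 ≤ b ^ 2 + 4 * α * Q := by positivity
  set s := √(b ^ 2 + 4 * α * Q)
  have hs : s ^ 2 = b ^ 2 + 4 * α * Q := sq_sqrt hdisc
  have hs₀ : 0 ≤ s := sqrt_nonneg _
  have hsb : |b| < s := abs_lt_of_sq_lt_sq (by nlinarith [mul_pos hα hQ]) hs₀
  obtain ⟨hsb₁, hsb₂⟩ := abs_lt.1 hsb
  obtain ⟨u, hu⟩ : ∃ u, 2 * α * u = s - b := ⟨(s - b) / (2 * α), by field_simp⟩
  have hroot : α * u ^ 2 + b * u = Q :=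
    mul_left_cancel₀ (by positivity : (4 * α) ≠ 0)
      (by linear_combination (2 * α * u + s + b) * hu + hs)
  refine ⟨u, pos_of_mul_pos_right (a := 2 * α) (by linarith) (by positivity), by linarith,
    fun x => by linear_combination -hroot⟩

theorem latitudinal_range_of_pos {a Q Φ : ℝ} (ha : a ≠ 0) (hQ : 0 < Q) :
    ∃ Cmax : ℝ, 0 < Cmax ∧ Cmax ≤ 1 ∧
      {C : ℝ | C ∈ Ioo (-1 : ℝ) 1 ∧ 0 ≤ Q - (Φ ^ 2 / (1 - C ^ 2) - a ^ 2) * C ^ 2}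
        = Icc (-Cmax) Cmax ∩ Ioo (-1 : ℝ) 1 ∧ (Cmax = 1 → Φ = 0) := by
  obtain ⟨u, hu, hk₀, hfactor⟩ :=
    exists_pos_root_factor (pow_two_pos_of_ne_zero ha) hQ (Q + Φ ^ 2 - a ^ 2)
  have hk (x : ℝ) (hx : 0 ≤ x) : 0 < a ^ 2 * (x + u) + (Q + Φ ^ 2 - a ^ 2) := by
    nlinarith [mul_nonneg (sq_nonneg a) hx]
  have hu₁ : u ≤ 1 := by
    have h := hfactor 1
    nlinarith [hk 1 zero_le_one, sq_nonneg Φ]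
  refine ⟨√u, sqrt_pos.2 hu, sqrt_le_one.2 hu₁, ?_, fun hu_eq => ?_⟩
  · ext C
    rw [mem_ofPred_eq, mem_inter_iff, and_comm, mem_Icc, ← Real.sq_le hu.le]
    refine and_congr_left fun hC => ?_
    have h₁C : 0 < 1 - C ^ 2 := by nlinarith [hC.1, hC.2]
    have hΘ : (Q - (Φ ^ 2 / (1 - C ^ 2) - a ^ 2) * C ^ 2) * (1 - C ^ 2)
        = (u - C ^ 2) * (a ^ 2 * (C ^ 2 + u) + (Q + Φ ^ 2 - a ^ 2)) := by
      rw [← hfactor]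
      field_simp
      ring
    rw [← mul_nonneg_iff_of_pos_right h₁C, hΘ, mul_nonneg_iff_of_pos_right (hk _ (sq_nonneg C)),
      sub_nonneg]
  · have h := hfactor 1
    rw [sqrt_eq_one.1 hu_eq] at h
    exact pow_eq_zero_iff two_ne_zero |>.1 (by linarith)

theorem kerr_latitudinal_range_general
    (M a : ℝ) (hM : 0 < M) (ha : 0 < a) (haM : a < M)
    (Φtrap Qtrap : ℝ → ℝ)
    (hQ : ∀ r, Qtrap r = -(r^3 * (r^3 - 6*M*r^2 + 9*M^2*r - 4*a^2*M))
        / (a^2 * (r - M)^2))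
    (Θ : ℝ → ℝ → ℝ)
    (hΘ : ∀ r C, Θ r C = Qtrap r - (Φtrap r ^ 2 / (1 - C^2) - a^2) * C^2)
    (r : ℝ)
    (hr : r ∈ Set.Ioo (2*M*(1 + Real.cos ((2/3) * Real.arccos (-a/M))))
                      (2*M*(1 + Real.cos ((2/3) * Real.arccos (a/M))))) :
    ∃ Cmax : ℝ, 0 < Cmax ∧ Cmax ≤ 1 ∧
      {C : ℝ | C ∈ Set.Ioo (-1 : ℝ) 1 ∧ 0 ≤ Θ r C}
        = Set.Icc (-Cmax) Cmax ∩ Set.Ioo (-1 : ℝ) 1 ∧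
      (Cmax = 1 → Φtrap r = 0) := by
  have ht₀ : 0 < a / M := div_pos ha hM
  have ht₁ : a / M < 1 := (div_lt_one hM).2 haM
  have hsq : (a / M) ^ 2 * M ^ 3 = a ^ 2 * M := by field_simp
  rw [neg_div] at hr
  have hinner := photonOrbitRadius_mem_Ioo_of_neg hM (t := -(a / M)) (by linarith) (by linarith)
  have hcubic : r ^ 3 - 6 * M * r ^ 2 + 9 * M ^ 2 * r - 4 * a ^ 2 * M < 0 := by
    refine cubic_neg_of_mem_Ioo_roots hinner.1 hinner.2 (three_mul_lt_photonOrbitRadius hM ht₀ ht₁)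
      ?_ ?_ hr.1 hr.2
    · simpa [hsq, mul_assoc] using
        photonOrbitRadius_cubic M (t := -(a / M)) (by linarith) (by linarith)
    · simpa [hsq, mul_assoc] using photonOrbitRadius_cubic M (t := a / M) (by linarith) ht₁.le
  have hrM : M < r := hinner.1.trans hr.1
  have hQpos : 0 < Qtrap r := by
    rw [hQ, neg_mul_eq_mul_neg]
    exact div_pos (mul_pos (pow_pos (by linarith) 3) (by linarith))
      (mul_pos (pow_pos ha 2) (pow_pos (sub_pos.2 hrM) 2))
  simp only [hΘ]
  exact latitudinal_range_of_pos ha.ne' hQpos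

/-- for each spherical photon orbit radius, the accessible latitudes form
a closed symmetric interval `[−C_max, C_max]`, reaching the axis only for vanishing
angular momentum. -/
theorem kerr_latitudinal_range
    (M a : ℝ) (hM : 0 < M) (ha : 0 < a) (haM : a < M)
    (Φtrap Qtrap : ℝ → ℝ)
    (hΦ : ∀ r, Φtrap r = -(r^3 - 3*M*r^2 + a^2*r + a^2*M) / (a * (r - M)))
    (hQ : ∀ r, Qtrap r = -(r^3 * (r^3 - 6*M*r^2 + 9*M^2*r - 4*a^2*M))
        / (a^2 * (r - M)^2))
    (Θ : ℝ → ℝ → ℝ)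
    (hΘ : ∀ r C, Θ r C = Qtrap r - (Φtrap r ^ 2 / (1 - C^2) - a^2) * C^2)
    (r : ℝ)
    (hr : r ∈ Set.Ioo (2*M*(1 + Real.cos ((2/3) * Real.arccos (-a/M))))
                      (2*M*(1 + Real.cos ((2/3) * Real.arccos (a/M))))) :
    ∃ Cmax : ℝ, 0 < Cmax ∧ Cmax ≤ 1 ∧
      {C : ℝ | C ∈ Set.Ioo (-1 : ℝ) 1 ∧ 0 ≤ Θ r C}
        = Set.Icc (-Cmax) Cmax ∩ Set.Ioo (-1 : ℝ) 1 ∧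
      (Cmax = 1 → Φtrap r = 0) :=
  kerr_latitudinal_range_general M a hM ha haM Φtrap Qtrap hQ Θ hΘ r hr
end
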